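/- arXiv:1901.07661 — 4 statements merged into one kernel-verified Lean document; each statement's English description precedes it below -/
import Mathlib

section
/- For every prime p, the map φ_p : ℤ_p → ℤ_p defined by φ_p(α) = (α^p − α)/p is well defined, surjective, and exactly p-to-1: every β ∈ ℤ_p has exactly p preimages in ℤ_p under φ_p. -/
/-!
Modulo `p` the polynomial `X ^ p - X - p β` becomes `X ^ p - X`, which vanishes at every
residue class by Fermat, while its derivative `p X ^ (p - 1) - 1` is `-1`, a unit. So Hensel's
lemma lifts each of the `p` residues to exactly one root in `ℤ_p`, and the roots are precisely
the preimages of `β` under `φ_p`. Fermat also gives `p ∣ α ^ p - α`, so `φ_p` is well defined.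
-/

open Polynomial

namespace PadicInt

variable {p : ℕ} [Fact p.Prime]

theorem norm_lt_one_iff_toZMod_eq_zero (x : ℤ_[p]) : ‖x‖ < 1 ↔ toZMod x = 0 := by
  rw [← RingHom.mem_ker, ker_toZMod, IsLocalRing.mem_maximalIdeal, mem_nonunits]

theorem norm_sub_lt_one_iff_toZMod_eq (x y : ℤ_[p]) : ‖x - y‖ < 1 ↔ toZMod x = toZMod y := by
  rw [norm_lt_one_iff_toZMod_eq_zero, map_sub, sub_eq_zero]

theorem norm_eq_one_of_toZMod_ne_zero {x : ℤ_[p]} (hx : toZMod x ≠ 0) : ‖x‖ = 1 :=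
  (norm_le_one x).antisymm (not_lt.mp fun h => hx ((norm_lt_one_iff_toZMod_eq_zero x).mp h))

theorem toZMod_pow_sub_self (x : ℤ_[p]) : toZMod (x ^ p - x) = 0 := by
  rw [map_sub, map_pow, ZMod.pow_card, sub_self]

theorem natCast_dvd_pow_sub_self (x : ℤ_[p]) : (p : ℤ_[p]) ∣ x ^ p - x := by
  rw [← norm_lt_one_iff_dvd, norm_lt_one_iff_toZMod_eq_zero]
  exact toZMod_pow_sub_self x

theorem existsUnique_pow_sub_self_eq {γ : ℤ_[p]} (hγ : toZMod γ = 0) (a : ZMod p) :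
    ∃! z : ℤ_[p], z ^ p - z = γ ∧ toZMod z = a := by
  set F : ℤ_[p][X] := X ^ p - X - C γ
  have hF : ∀ z, F.aeval z = z ^ p - z - γ := fun z => by simp [F]
  have hF' : ∀ z, ‖F.derivative.aeval z‖ = 1 := fun z => by
    refine norm_eq_one_of_toZMod_ne_zero (p := p) ?_
    simp [F, derivative_pow]
  set a₀ : ℤ_[p] := (a.val : ℤ_[p])
  have ha₀ : toZMod a₀ = a := by simp [a₀]
  have hroot_iff : ∀ z, F.aeval z = 0 ↔ z ^ p - z = γ := fun z => by rw [hF, sub_eq_zero]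
  have hnear_iff : ∀ z, ‖z - a₀‖ < ‖F.derivative.aeval a₀‖ ↔ toZMod z = a := fun z => by
    rw [hF', norm_sub_lt_one_iff_toZMod_eq, ha₀]
  have hnorm : ‖F.aeval a₀‖ < ‖F.derivative.aeval a₀‖ ^ 2 := by
    rw [hF', one_pow, hF, norm_lt_one_iff_toZMod_eq_zero, map_sub, toZMod_pow_sub_self, hγ,
      sub_zero]
  obtain ⟨z, hz, hza₀, -, huniq⟩ := hensels_lemma hnorm
  refine ⟨z, ⟨(hroot_iff z).mp hz, (hnear_iff z).mp hza₀⟩, ?_⟩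
  rintro y ⟨hy, hya⟩
  exact huniq y ((hroot_iff y).mpr hy) ((hnear_iff y).mpr hya)

theorem ncard_setOf_pow_sub_self_eq {γ : ℤ_[p]} (hγ : toZMod γ = 0) :
    {z : ℤ_[p] | z ^ p - z = γ}.ncard = p := by
  have hbij : Set.BijOn toZMod {z : ℤ_[p] | z ^ p - z = γ} Set.univ := by
    refine ⟨Set.mapsTo_univ _ _, fun x hx y hy hxy => ?_, fun a _ => ?_⟩
    · obtain ⟨z, -, hz⟩ := existsUnique_pow_sub_self_eq hγ (toZMod x)
      exact (hz x ⟨hx, rfl⟩).trans (hz y ⟨hy, hxy.symm⟩).symm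
    · obtain ⟨z, ⟨hz, hza⟩, -⟩ := existsUnique_pow_sub_self_eq hγ a
      exact ⟨z, hz, hza⟩
  rw [hbij.ncard_eq, Set.ncard_univ, Nat.card_zmod]

theorem coe_div_natCast_eq_coe_iff (x y : ℤ_[p]) : (x : ℚ_[p]) / p = y ↔ x = p * y := by
  have hp : (p : ℚ_[p]) ≠ 0 := Nat.cast_ne_zero.mpr (Fact.out : p.Prime).ne_zero
  rw [div_eq_iff hp, mul_comm, ← coe_natCast, ← coe_mul]
  exact Subtype.coe_inj

end PadicInt

open PadicInt

/-- For every prime `p`, the map `φ_p : ℤ_p → ℤ_p`, `φ_p(α) = (α^p − α)/p`,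
is well defined (the value `(α^p − α)/p`, computed in `ℚ_p`, lies in `ℤ_p`), surjective, and
exactly `p`-to-`1`: every `β ∈ ℤ_p` has exactly `p` preimages in `ℤ_p`. -/
theorem phi_p_well_defined_surjective_p_to_one (p : ℕ) [Fact p.Prime] :
    (∀ α : ℤ_[p], ∃ γ : ℤ_[p], (γ : ℚ_[p]) = ((α : ℚ_[p]) ^ p - (α : ℚ_[p])) / p) ∧
    (∀ β : ℤ_[p], ∃ α : ℤ_[p], ((α : ℚ_[p]) ^ p - (α : ℚ_[p])) / p = (β : ℚ_[p])) ∧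
    (∀ β : ℤ_[p],
      {α : ℤ_[p] | ((α : ℚ_[p]) ^ p - (α : ℚ_[p])) / p = (β : ℚ_[p])}.ncard = p) := by
  have hφ : ∀ α β : ℤ_[p],
      ((α : ℚ_[p]) ^ p - (α : ℚ_[p])) / p = (β : ℚ_[p]) ↔ α ^ p - α = p * β := fun α β => by
    rw [← coe_div_natCast_eq_coe_iff]
    push_cast
    rfl
  have hpβ : ∀ β : ℤ_[p], toZMod ((p : ℤ_[p]) * β) = 0 := fun β => by simp
  refine ⟨fun α => ?_, fun β => ?_, fun β => ?_⟩
  · obtain ⟨γ, hγ⟩ := natCast_dvd_pow_sub_self α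
    exact ⟨γ, ((hφ α γ).mpr hγ).symm⟩
  · obtain ⟨α, ⟨hα, -⟩, -⟩ := existsUnique_pow_sub_self_eq (hpβ β) 0
    exact ⟨α, (hφ α β).mpr hα⟩
  · simp_rw [hφ]
    exact ncard_setOf_pow_sub_self_eq (hpβ β)
end

section
/- Let p be a prime, φ_p(x) = (x^p − x)/p, n ≥ 1, and let α be an algebraic number with φ_p^n(α) = 1. Then every Galois conjugate β of α over ℚ satisfies: |β|_v ≤ 1 for every non-archimedean place v of ℚ̄ (including those above p), and |β| ≤ (p+1)^{1/(p−1)} for every archimedean embedding. Consequently the absolute Weil height satisfies h(α) ≤ log(p+1)/(p−1). -/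
open Polynomial

/-- The least positive integer `c` such that `c·P` has integer coefficients (the lcm of the
denominators of the coefficients of `P ∈ ℚ[x]`). -/
def ratDen (P : Polynomial ℚ) : ℕ :=
  (Finset.range (P.natDegree + 1)).lcm fun i => (P.coeff i).den

/-- The absolute logarithmic Weil height of an algebraic number `α ∈ ℂ`:
if `P = minpoly ℚ α` has degree `d`, denominator `c = ratDen P`, and complex roots
`β_1, …, β_d`, then `h(α) = (1/d)(log c + Σ_i log⁺|β_i|)`.  (By Gauss's lemma and the
product formula this agrees with the usual definition
`h(α) = (1/[ℚ(α):ℚ]) Σ_{v ∈ M_ℚ} Σ_{β ∈ O_α} log⁺|β|_v`.) -/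
noncomputable def weilHeight (α : ℂ) : ℝ :=
  ((minpoly ℚ α).natDegree : ℝ)⁻¹ *
    (Real.log (ratDen (minpoly ℚ α)) +
      (((minpoly ℚ α).aroots ℂ).map fun β => Real.log (max 1 ‖β‖)).sum)

/-- The map `φ_p(x) = (x^p − x)/p` on the complex numbers. -/
noncomputable def phiC (p : ℕ) : ℂ → ℂ := fun x => (x ^ p - x) / p

/-! The disc `‖x‖ ≤ R` contains every solution of `φ_p^n(x) = 1`, where `R = 1` at a
non-archimedean place and `R = (p+1)^{1/(p-1)}` at an archimedean one: outside it `φ_p`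
strictly increases the norm (at a non-archimedean place because `|x^p - x| = |x|^p` and
`|1/p| ≥ 1`; at an archimedean one because `|x|^{p-1} - 1 > p`), so an orbit starting outside
never reaches `1`. Every conjugate of `α` is again a root of `φ_p^n(x) - 1`, and the equation
`x^p - x = p φ_p(x)` shows, going down the orbit, that `α` is an algebraic integer; the height
is then the average of `log⁺|β|` over the complex conjugates `β`. -/

open Set

section Phi

variable {K : Type*}

noncomputable def phi [Field K] (p : ℕ) (x : K) : K := (x ^ p - x) / p

lemma phiC_eq_phi (p : ℕ) : phiC p = phi p := rfl

noncomputable def phiIterPoly (p : ℕ) : ℕ → ℚ[X]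
  | 0 => X
  | k + 1 => C (p : ℚ)⁻¹ * (phiIterPoly p k ^ p - phiIterPoly p k)

lemma aeval_phiIterPoly [Field K] [CharZero K] (p : ℕ) (x : K) (n : ℕ) :
    aeval x (phiIterPoly p n) = (phi p)^[n] x := by
  induction n with
  | zero => simp [phiIterPoly]
  | succ n ih =>
    rw [Function.iterate_succ_apply', phiIterPoly, ← ih]
    simp [phi, div_eq_inv_mul]

lemma iterate_phi_eq_one_of_aeval_minpoly {L : Type*} [Field L] [CharZero L] [Field K]
    [CharZero K] {p n : ℕ} {α : L} (hα : (phi p)^[n] α = 1) {β : K}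
    (hβ : aeval β (minpoly ℚ α) = 0) : (phi p)^[n] β = 1 := by
  have hroot : aeval α (phiIterPoly p n - 1) = 0 := by
    rw [map_sub, aeval_phiIterPoly, hα, map_one, sub_self]
  have := aeval_eq_zero_of_dvd_aeval_eq_zero (minpoly.dvd ℚ α hroot) hβ
  rwa [map_sub, aeval_phiIterPoly, map_one, sub_eq_zero] at this

lemma isIntegral_of_isIntegral_phi [Field K] [CharZero K] {p : ℕ} (hp : 2 ≤ p) {x : K}
    (h : IsIntegral ℤ (phi p x)) : IsIntegral ℤ x := by
  have hdeg : (X : ℤ[X]).natDegree < (X ^ p : ℤ[X]).natDegree := by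
    rw [natDegree_X, natDegree_X_pow]; omega
  have hmonic : (X ^ p - X : ℤ[X]).Monic :=
    monic_X_pow_sub (by rw [degree_X]; exact_mod_cast (by omega : 1 < p))
  refine IsIntegral.of_aeval_monic hmonic ?_ ?_
  · rw [natDegree_sub_eq_left_of_natDegree_lt hdeg, natDegree_X_pow]; omega
  · have hp0 : (p : K) ≠ 0 := Nat.cast_ne_zero.mpr (by omega)
    have hx : aeval x (X ^ p - X : ℤ[X]) = p • phi p x := by
      rw [nsmul_eq_mul, phi, mul_div_cancel₀ _ hp0]; simp
    rw [hx]
    exact h.nsmul p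

lemma isIntegral_of_iterate_phi_eq_one [Field K] [CharZero K] {p : ℕ} (hp : 2 ≤ p) :
    ∀ {n : ℕ} {x : K}, (phi p)^[n] x = 1 → IsIntegral ℤ x
  | 0, x, hx => by rw [Function.iterate_zero_apply] at hx; exact hx ▸ isIntegral_one
  | n + 1, x, hx =>
    isIntegral_of_isIntegral_phi hp (isIntegral_of_iterate_phi_eq_one hp (n := n) hx)

lemma mapsTo_phi_one_lt_norm [NormedField K] [CharZero K] [IsUltrametricDist K] {p : ℕ}
    (hp : 2 ≤ p) : MapsTo (phi p) {x : K | 1 < ‖x‖} {x | 1 < ‖x‖} := by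
  intro x (hx : 1 < ‖x‖)
  have hp0 : 0 < ‖(p : K)‖ := norm_pos_iff.mpr (Nat.cast_ne_zero.mpr (by omega))
  have hlt : ‖x‖ < ‖x ^ p‖ := by
    rw [norm_pow]; exact lt_self_pow₀ hx (by omega)
  have hsub : ‖x ^ p - x‖ = ‖x ^ p‖ := by
    rw [sub_eq_add_neg, IsUltrametricDist.norm_add_eq_max_of_norm_ne_norm
      (by rw [norm_neg]; exact hlt.ne'), norm_neg, max_eq_left hlt.le]
  show 1 < ‖(x ^ p - x) / p‖
  rw [norm_div, hsub, lt_div_iff₀ hp0]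
  calc 1 * ‖(p : K)‖ ≤ 1 := by simpa using IsUltrametricDist.norm_natCast_le_one K p
    _ < ‖x ^ p‖ := hx.trans hlt

lemma mapsTo_phi_lt_norm [NormedField K] [CharZero K] {p : ℕ} (hp : 2 ≤ p) {R : ℝ}
    (hR0 : 0 ≤ R) (hR : (p : ℝ) + 1 ≤ R ^ (p - 1)) :
    MapsTo (phi p) {x : K | R < ‖x‖} {x | R < ‖x‖} := by
  obtain ⟨m, rfl⟩ : ∃ m, p = m + 1 := ⟨p - 1, by omega⟩
  intro x (hx : R < ‖x‖)
  have hp0 : 0 < ‖((m + 1 : ℕ) : K)‖ := norm_pos_iff.mpr (Nat.cast_ne_zero.mpr m.succ_ne_zero)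
  have hpow : (m : ℝ) + 2 < ‖x‖ ^ m := by
    have := hR.trans_lt (pow_lt_pow_left₀ hx hR0 (by omega : m + 1 - 1 ≠ 0))
    push_cast at this; simpa [add_assoc, one_add_one_eq_two] using this
  show R < ‖(x ^ (m + 1) - x) / (m + 1 : ℕ)‖
  rw [norm_div, lt_div_iff₀ hp0]
  calc R * ‖((m + 1 : ℕ) : K)‖ ≤ R * (m + 1) := by
        gcongr; simpa using Nat.norm_cast_le (α := K) (m + 1)
    _ < ‖x‖ * (‖x‖ ^ m - 1) := by gcongr; linarith
    _ = ‖x ^ (m + 1)‖ - ‖x‖ := by rw [norm_pow, pow_succ]; ring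
    _ ≤ ‖x ^ (m + 1) - x‖ := norm_sub_norm_le _ _

lemma norm_le_of_mapsTo_iterate {E : Type*} [Norm E] {f : E → E} {R : ℝ}
    (hf : MapsTo f {x | R < ‖x‖} {x | R < ‖x‖}) {n : ℕ} {x : E} (hx : ‖f^[n] x‖ ≤ R) :
    ‖x‖ ≤ R :=
  not_lt.mp fun h => (hf.iterate n h).not_ge hx

end Phi

section Height

lemma ratDen_map_algebraMap_int (P : ℤ[X]) : ratDen (P.map (algebraMap ℤ ℚ)) = 1 :=
  Nat.dvd_one.mp <| Finset.lcm_dvd fun i _ => by simp [coeff_map]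

lemma sum_log_max_one_norm_aroots_le {P : ℚ[X]} {B : ℝ} (hB : 1 ≤ B)
    (hroots : ∀ β : ℂ, aeval β P = 0 → ‖β‖ ≤ B) :
    ((P.aroots ℂ).map fun β => Real.log (max 1 ‖β‖)).sum ≤ P.natDegree * Real.log B := by
  have hterm : ∀ y ∈ (P.aroots ℂ).map fun β => Real.log (max 1 ‖β‖), y ≤ Real.log B := by
    intro y hy
    obtain ⟨β, hβ, rfl⟩ := Multiset.mem_map.mp hy
    refine Real.log_le_log (by positivity) (max_le hB (hroots β ?_))
    rw [aeval_def, ← eval_map]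
    exact isRoot_of_mem_roots hβ
  have hcard : Multiset.card (P.aroots ℂ) ≤ P.natDegree :=
    (card_roots' _).trans (natDegree_map _).le
  calc _ ≤ Multiset.card (P.aroots ℂ) • Real.log B := by
        simpa using Multiset.sum_le_card_nsmul _ _ hterm
    _ ≤ P.natDegree * Real.log B := by
        rw [nsmul_eq_mul]; gcongr; exact Real.log_nonneg hB

lemma weilHeight_le_log_of_isIntegral {α : ℂ} (hα : IsIntegral ℤ α) {B : ℝ} (hB : 1 ≤ B)
    (hconj : ∀ β : ℂ, aeval β (minpoly ℚ α) = 0 → ‖β‖ ≤ B) : weilHeight α ≤ Real.log B := by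
  have hden : ratDen (minpoly ℚ α) = 1 := by
    rw [minpoly.isIntegrallyClosed_eq_field_fractions' ℚ hα, ratDen_map_algebraMap_int]
  have hd : (0 : ℝ) < (minpoly ℚ α).natDegree :=
    Nat.cast_pos.mpr (minpoly.natDegree_pos (hα.tower_top (A := ℚ)))
  rw [weilHeight, hden, Nat.cast_one, Real.log_one, zero_add, inv_mul_le_iff₀ hd]
  exact sum_log_max_one_norm_aroots_le hB hconj

end Height

lemma rpow_one_div_sub_one_pow {x : ℝ} (hx : 0 ≤ x) {p : ℕ} (hp : 2 ≤ p) :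
    (x ^ ((1 : ℝ) / ((p : ℝ) - 1))) ^ (p - 1) = x := by
  have : (1 : ℝ) / ((p : ℝ) - 1) = ((p - 1 : ℕ) : ℝ)⁻¹ := by
    rw [Nat.cast_sub (by omega), Nat.cast_one, one_div]
  rw [this, Real.rpow_inv_natCast_pow hx (by omega)]

theorem conjugate_bounds_and_height_bound_general (p : ℕ) (hp : p.Prime) (n : ℕ)
    (α : ℂ) (hα : (phiC p)^[n] α = 1) :
    (∀ (ℓ : ℕ) [Fact ℓ.Prime]
      (K : Type) [NormedField K] [CharZero K] [IsUltrametricDist K] [Algebra ℚ_[ℓ] K],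
      (∀ a : ℚ_[ℓ], ‖algebraMap ℚ_[ℓ] K a‖ = ‖a‖) →
      ∀ β : K, Polynomial.aeval β (minpoly ℚ α) = 0 → ‖β‖ ≤ 1) ∧
    (∀ β : ℂ, Polynomial.aeval β (minpoly ℚ α) = 0 →
      ‖β‖ ≤ ((p : ℝ) + 1) ^ ((1 : ℝ) / ((p : ℝ) - 1))) ∧
    weilHeight α ≤ Real.log ((p : ℝ) + 1) / ((p : ℝ) - 1) := by
  have hp2 := hp.two_le
  rw [phiC_eq_phi] at hα
  set R := ((p : ℝ) + 1) ^ ((1 : ℝ) / ((p : ℝ) - 1))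
  have hp2R : (2 : ℝ) ≤ p := by exact_mod_cast hp2
  have hp1 : (0 : ℝ) ≤ (p : ℝ) + 1 := by positivity
  have hR1 : 1 ≤ R := Real.one_le_rpow (by linarith) (div_nonneg zero_le_one (by linarith))
  have harch : ∀ β : ℂ, aeval β (minpoly ℚ α) = 0 → ‖β‖ ≤ R := fun β hβ =>
    norm_le_of_mapsTo_iterate
      (mapsTo_phi_lt_norm hp2 (by positivity) (rpow_one_div_sub_one_pow hp1 hp2).ge)
      (by rwa [iterate_phi_eq_one_of_aeval_minpoly hα hβ, norm_one])
  refine ⟨fun ℓ _ K _ _ _ _ _ β hβ => ?_, harch, ?_⟩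
  · exact norm_le_of_mapsTo_iterate (mapsTo_phi_one_lt_norm hp2)
      (by rw [iterate_phi_eq_one_of_aeval_minpoly hα hβ, norm_one])
  · calc weilHeight α ≤ Real.log R :=
          weilHeight_le_log_of_isIntegral (isIntegral_of_iterate_phi_eq_one hp2 hα) hR1 harch
      _ = _ := by rw [Real.log_rpow (by positivity), one_div, inv_mul_eq_div]

/-- Let `p` be a prime, `n ≥ 1`, and let `α` be an algebraic number with
`φ_p^n(α) = 1`.  Then every Galois conjugate `β` of `α` over `ℚ` satisfies `|β|_v ≤ 1` at
every non-archimedean place `v` (expressed here as: the image of `β` in any nonarchimedean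
normed field extension of any `ℚ_ℓ` has norm at most `1`), and `|β| ≤ (p+1)^{1/(p−1)}` for
every archimedean embedding.  Consequently `h(α) ≤ log(p+1)/(p−1)`. -/
theorem conjugate_bounds_and_height_bound (p : ℕ) (hp : p.Prime) (n : ℕ) (hn : 1 ≤ n)
    (α : ℂ) (halg : IsAlgebraic ℚ α) (hα : (phiC p)^[n] α = 1) :
    (∀ (ℓ : ℕ) [Fact ℓ.Prime]
      (K : Type) [NormedField K] [CharZero K] [IsUltrametricDist K] [Algebra ℚ_[ℓ] K],
      (∀ a : ℚ_[ℓ], ‖algebraMap ℚ_[ℓ] K a‖ = ‖a‖) →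
      ∀ β : K, Polynomial.aeval β (minpoly ℚ α) = 0 → ‖β‖ ≤ 1) ∧
    (∀ β : ℂ, Polynomial.aeval β (minpoly ℚ α) = 0 →
      ‖β‖ ≤ ((p : ℝ) + 1) ^ ((1 : ℝ) / ((p : ℝ) - 1))) ∧
    weilHeight α ≤ Real.log ((p : ℝ) + 1) / ((p : ℝ) - 1) :=
  conjugate_bounds_and_height_bound_general p hp n α hα
end

section
/- Let p be a prime, φ_p(x) = (x^p − x)/p, and let x ∈ ℂ_p with |x|_p > 1. Then the canonical local height ĥ_{φ_p,p}(x) = lim_{n→∞} p^{-n} log⁺ |φ_p^n(x)|_p exists and equals log p/(p−1) + log|x|_p. -/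
open Filter

/-- Let `p` be a prime and `φ_p(x) = (x^p − x)/p`.  In any nonarchimedean
normed field `K` extending `ℚ_p` (in particular in `ℂ_p`), if `|x| > 1` then the canonical
local height `ĥ_{φ_p,p}(x) = lim_{n→∞} p^{−n} log⁺|φ_p^n(x)|` exists and equals
`log p/(p−1) + log|x|`. -/
theorem padic_canonical_local_height_outside_disc (p : ℕ) [Fact p.Prime]
    (K : Type) [NormedField K] [CharZero K] [IsUltrametricDist K] [Algebra ℚ_[p] K]
    (hext : ∀ a : ℚ_[p], ‖algebraMap ℚ_[p] K a‖ = ‖a‖)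
    (x : K) (hx : 1 < ‖x‖) :
    Tendsto
      (fun n : ℕ => ((p : ℝ) ^ n)⁻¹ *
        Real.log (max 1 ‖(fun y : K => (y ^ p - y) / (p : K))^[n] x‖))
      atTop (nhds (Real.log p / ((p : ℝ) - 1) + Real.log ‖x‖)) := by
  set φ : K → K := fun y => (y ^ p - y) / (p : K) with hφ
  have hp : (p : ℝ) > 1 := by exact_mod_cast (Fact.out : p.Prime).one_lt
  have hp2 : 2 ≤ p := (Fact.out : p.Prime).two_le
  have hnormp : ‖(p : K)‖ = ((p : ℝ))⁻¹ := by
    rw [show ((p : K)) = algebraMap ℚ_[p] K (p : ℚ_[p]) by simp, hext, Padic.norm_p]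
  -- key step
  have step : ∀ y : K, 1 < ‖y‖ → ‖φ y‖ = ‖y‖ ^ p * p := by
    intro y hy
    have hylt : ‖y‖ < ‖y‖ ^ p := by
      calc ‖y‖ = ‖y‖ ^ 1 := (pow_one _).symm
      _ < ‖y‖ ^ p := pow_lt_pow_right₀ hy (by omega)
    have hne : ‖y ^ p‖ ≠ ‖-y‖ := by
      rw [norm_pow, norm_neg]; exact ne_of_gt hylt
    have : ‖y ^ p - y‖ = ‖y‖ ^ p := by
      rw [sub_eq_add_neg, IsUltrametricDist.norm_add_eq_max_of_norm_ne_norm hne,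
        norm_pow, norm_neg, max_eq_left hylt.le]
    rw [hφ]
    simp only [norm_div, this, hnormp, div_inv_eq_mul]
  have hpm : ((p : ℝ) - 1) ≠ 0 := by linarith
  -- norms of iterates
  have key : ∀ n : ℕ, 1 < ‖φ^[n] x‖ ∧
      Real.log ‖φ^[n] x‖ = (p : ℝ) ^ n * Real.log ‖x‖ +
        (((p : ℝ) ^ n - 1) / ((p : ℝ) - 1)) * Real.log p := by
    intro n
    induction n with
    | zero => simp [hx]
    | succ n ih =>
      obtain ⟨h1, h2⟩ := ih
      have hstep := step _ h1
      have hgt : 1 < ‖φ^[n] x‖ ^ p * p := by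
        have : (1:ℝ) < ‖φ^[n] x‖ ^ p := one_lt_pow₀ h1 (by omega)
        nlinarith
      constructor
      · rw [Function.iterate_succ_apply', hstep]; exact hgt
      · rw [Function.iterate_succ_apply', hstep,
          Real.log_mul (by positivity) (by positivity), Real.log_pow, h2]
        field_simp
        ring
  -- rewrite the sequence
  have hfun : (fun n : ℕ => ((p : ℝ) ^ n)⁻¹ *
        Real.log (max 1 ‖φ^[n] x‖)) =
      fun n : ℕ => Real.log ‖x‖ +
        ((1 - ((p : ℝ) ^ n)⁻¹) / ((p : ℝ) - 1)) * Real.log p := by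
    funext n
    obtain ⟨h1, h2⟩ := key n
    rw [max_eq_right h1.le, h2]
    have hpn : ((p : ℝ) ^ n) ≠ 0 := by positivity
    field_simp
  rw [hfun]
  have hlim : Tendsto (fun n : ℕ => ((p : ℝ) ^ n)⁻¹) atTop (nhds 0) :=
    tendsto_inv_atTop_zero.comp (tendsto_pow_atTop_atTop_of_one_lt hp)
  have : Tendsto (fun n : ℕ => Real.log ‖x‖ +
      ((1 - ((p : ℝ) ^ n)⁻¹) / ((p : ℝ) - 1)) * Real.log p) atTop
      (nhds (Real.log ‖x‖ + ((1 - 0) / ((p : ℝ) - 1)) * Real.log p)) := by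
    exact tendsto_const_nhds.add
      ((((tendsto_const_nhds.sub hlim)).div_const _).mul tendsto_const_nhds)
  convert this using 2
  rw [add_comm]
  ring
end

section
/- Let φ(x) = a x^d + ⋯ ∈ ℂ[x] be a polynomial of degree d ≥ 2 with leading coefficient a. Then the canonical local height ĥ_φ(x) = lim_{n→∞} d^{-n} log⁺|φ^n(x)| satisfies lim_{|x|→∞} (ĥ_φ(x) − log|x|) = (log|a|)/(d−1). -/
open Filter Polynomial

/-- The Call–Silverman canonical local height of `x ∈ ℂ` for a polynomial `φ ∈ ℂ[x]`:
`ĥ_φ(x) = lim_{n→∞} d^{−n} log⁺|φ^n(x)|`, where `d = deg φ`. -/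
noncomputable def canHeight (φ : Polynomial ℂ) (x : ℂ) : ℝ :=
  limUnder atTop fun n : ℕ =>
    ((φ.natDegree : ℝ) ^ n)⁻¹ *
      Real.log (max 1 (‖(fun y : ℂ => φ.eval y)^[n] x‖))

open Asymptotics Bornology Topology

/-! Given `η > 0`, outside a large disc `φ` does not decrease `|x|`, and
`log|φ(x)| = d log|x| + log|a|` up to an error `η`. So the orbit of such an `x` stays outside the
disc, and `s n = log|φ^n(x)|` satisfies `s (n+1) = d s n + log|a|` up to `η`. Telescoping
`d^{-n} s n` against the geometric series `∑ d^{-(n+1)} = 1/(d-1)` gives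
`ĥ_φ(x) = log|x| + log|a|/(d-1)` up to `η/(d-1)`. -/

theorem hasSum_inv_pow_succ {d : ℝ} (hd : 1 < d) :
    HasSum (fun n : ℕ => (d ^ (n + 1))⁻¹) (d - 1)⁻¹ := by
  have h := (hasSum_geometric_of_lt_one (by positivity) (inv_lt_one_of_one_lt₀ hd)).mul_left d⁻¹
  rw [show d⁻¹ * (1 - d⁻¹)⁻¹ = (d - 1)⁻¹ by field_simp] at h
  simpa only [pow_succ', mul_inv, inv_pow] using h

theorem exists_tendsto_inv_pow_mul_of_abs_sub_le {d c η : ℝ} (hd : 1 < d) {s : ℕ → ℝ}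
    (hs : ∀ n, |s (n + 1) - d * s n - c| ≤ η) :
    ∃ L, Tendsto (fun n => (d ^ n)⁻¹ * s n) atTop (𝓝 L) ∧
      |L - s 0 - c / (d - 1)| ≤ η / (d - 1) := by
  have hr := hasSum_inv_pow_succ hd
  -- increments of `d⁻ⁿ s n`, minus their expected value `c d⁻⁽ⁿ⁺¹⁾`
  set e : ℕ → ℝ := fun n => (d ^ (n + 1))⁻¹ * s (n + 1) - (d ^ n)⁻¹ * s n - c * (d ^ (n + 1))⁻¹
  have he : ∀ n, ‖e n‖ ≤ η * (d ^ (n + 1))⁻¹ := fun n => by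
    have : e n = (d ^ (n + 1))⁻¹ * (s (n + 1) - d * s n - c) := by
      simp only [e, pow_succ]; field_simp
    rw [this, Real.norm_eq_abs, abs_mul, abs_of_pos (by positivity), mul_comm]
    exact mul_le_mul_of_nonneg_right (hs n) (by positivity)
  have hes : HasSum e (∑' n, e n) := (Summable.of_norm_bounded (hr.summable.mul_left η) he).hasSum
  refine ⟨s 0 + (∑' n, e n + c * (d - 1)⁻¹), ?_, ?_⟩
  · refine ((hes.add (hr.mul_left c)).tendsto_sum_nat.const_add (s 0)).congr fun n => ?_
    simp only [e, sub_add_cancel, Finset.sum_range_sub fun n => (d ^ n)⁻¹ * s n]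
    rw [pow_zero, inv_one, one_mul, add_sub_cancel]
  · have := tsum_of_norm_bounded (hr.mul_left η) he
    rw [Real.norm_eq_abs] at this
    convert this using 2 <;> ring

theorem Polynomial.tendsto_log_norm_eval_sub_natDegree_mul {𝕜 : Type*} [NormedField 𝕜]
    {P : 𝕜[X]} (hP : P ≠ 0) :
    Tendsto (fun x => Real.log ‖P.eval x‖ - P.natDegree * Real.log ‖x‖) (cobounded 𝕜)
      (𝓝 (Real.log ‖P.leadingCoeff‖)) := by
  obtain ⟨u, hu, heq⟩ := isEquivalent_cobounded_leading_monomial (P := P) |>.exists_eq_mul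
  have hlog : Tendsto (fun x => Real.log ‖u x‖ + Real.log ‖P.leadingCoeff‖) (cobounded 𝕜)
      (𝓝 (Real.log ‖P.leadingCoeff‖)) := by
    have hnorm : Tendsto (fun x => ‖u x‖) (cobounded 𝕜) (𝓝 1) := by simpa using hu.norm
    simpa using ((Real.continuousAt_log one_ne_zero).tendsto.comp hnorm).add_const
      (Real.log ‖P.leadingCoeff‖)
  refine hlog.congr' ?_
  filter_upwards [heq, hu.eventually_ne one_ne_zero, eventually_ne_cobounded 0] with x hx hux hx0
  have hlc : P.leadingCoeff ≠ 0 := leadingCoeff_ne_zero.2 hP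
  rw [hx, Pi.mul_apply, norm_mul, norm_mul, norm_pow, Real.log_mul, Real.log_mul, Real.log_pow]
  · ring
  all_goals positivity

theorem Polynomial.eventually_norm_le_norm_eval {𝕜 : Type*} [NormedField 𝕜] {P : 𝕜[X]}
    (hP : 1 < P.natDegree) : ∀ᶠ x in cobounded 𝕜, ‖x‖ ≤ ‖P.eval x‖ := by
  have hlc : P.leadingCoeff ≠ 0 := leadingCoeff_ne_zero.2 (ne_zero_of_natDegree_gt hP)
  have h : (fun x : 𝕜 => x ^ 1) =o[cobounded 𝕜] P.eval :=
    ((isLittleO_pow_pow_cobounded_of_lt hP).const_mul_right hlc).trans_isTheta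
      isEquivalent_cobounded_leading_monomial.isTheta_symm
  simpa using h.def one_pos

theorem abs_canHeight_sub_log_sub_le {φ : ℂ[X]} (hd : 1 < φ.natDegree) {S : Set ℂ} {η : ℝ}
    (hS : Set.MapsTo φ.eval S S) (hS₁ : ∀ y ∈ S, 1 ≤ ‖y‖)
    (hη : ∀ y ∈ S,
      |Real.log ‖φ.eval y‖ - φ.natDegree * Real.log ‖y‖ - Real.log ‖φ.leadingCoeff‖| ≤ η)
    {x : ℂ} (hx : x ∈ S) :
    |canHeight φ x - Real.log ‖x‖ - Real.log ‖φ.leadingCoeff‖ / (φ.natDegree - 1)| ≤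
      η / (φ.natDegree - 1) := by
  have horbit : ∀ n, (fun y => φ.eval y)^[n] x ∈ S := fun n => hS.iterate n hx
  obtain ⟨L, hL, hLbound⟩ := exists_tendsto_inv_pow_mul_of_abs_sub_le (d := (φ.natDegree : ℝ))
    (by exact_mod_cast hd) (s := fun n => Real.log ‖(fun y => φ.eval y)^[n] x‖)
    (fun n => by simpa only [Function.iterate_succ_apply'] using hη _ (horbit n))
  have hcan : canHeight φ x = L :=
    (hL.congr fun n => by rw [max_eq_right (hS₁ _ (horbit n))]).limUnder_eq
  simpa [hcan] using hLbound

/-- Let `φ(x) = a x^d + ⋯ ∈ ℂ[x]` have degree `d ≥ 2` and leading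
coefficient `a`.  Then `lim_{|x|→∞} (ĥ_φ(x) − log|x|) = log|a|/(d−1)`. -/
theorem canonical_local_height_asymptotic (φ : Polynomial ℂ) (hd : 2 ≤ φ.natDegree)
    (a : ℂ) (ha : φ.leadingCoeff = a) :
    Tendsto (fun x : ℂ => canHeight φ x - Real.log ‖x‖)
      (comap (fun x : ℂ => ‖x‖) atTop)
      (nhds (Real.log ‖a‖ / ((φ.natDegree : ℝ) - 1))) := by
  subst ha
  have hd₁ : (0 : ℝ) < φ.natDegree - 1 := by
    rw [sub_pos]; exact_mod_cast hd
  rw [comap_norm_atTop, Metric.tendsto_nhds]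
  intro ε hε
  have hlog := (tendsto_log_norm_eval_sub_natDegree_mul (ne_zero_of_natDegree_gt hd)).eventually
    (Metric.closedBall_mem_nhds _ (mul_pos hd₁ (half_pos hε)))
  obtain ⟨R, -, hR⟩ := hasBasis_cobounded_norm.eventually_iff.1
    (((eventually_norm_le_norm_eval hd).and hlog).and
      (tendsto_norm_cobounded_atTop.eventually_ge_atTop 1))
  have hS : Set.MapsTo φ.eval {y | R ≤ ‖y‖} {y | R ≤ ‖y‖} := fun y hy => hy.trans (hR hy).1.1
  filter_upwards [tendsto_norm_cobounded_atTop.eventually_ge_atTop R] with x hx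
  rw [Real.dist_eq]
  calc _ ≤ (φ.natDegree - 1) * (ε / 2) / (φ.natDegree - 1) :=
        abs_canHeight_sub_log_sub_le hd hS (fun y hy => (hR hy).2)
          (fun y hy => (Real.dist_eq _ _).symm.trans_le (hR hy).1.2) hx
    _ = ε / 2 := mul_div_cancel_left₀ _ hd₁.ne'
    _ < ε := half_lt_self hε
end
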